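/- Let R = μ₀R⁰ + Σ_{i=1}^m μᵢR^{Jᵢ} be a semi-Clifford algebraic curvature tensor on a scalar product space (V,g), i.e. the Hurwitz-like constants satisfy cᵢ ∈ {−1,1} for all i, and suppose μᵢ ≠ 0 for all 1 ≤ i ≤ m. If (3cᵢμᵢ + μ₀)·μᵢ > 0 for all 1 ≤ i ≤ m, or (3cᵢμᵢ + μ₀)·μᵢ < 0 for all 1 ≤ i ≤ m, then R is totally Jacobi-dual. -/

import Mathlib

open Module Finset

/-- The algebraic curvature tensor `R⁰` of constant sectional curvature one. -/
def R0 {V : Type*} [AddCommGroup V] [Module ℝ V] (g : LinearMap.BilinForm ℝ V)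
    (X Y Z W : V) : ℝ :=
  g Y Z * g X W - g X Z * g Y W

/-- The algebraic curvature tensor `R^J` generated by a `g`-skew-adjoint endomorphism `J`. -/
def RJ {V : Type*} [AddCommGroup V] [Module ℝ V] (g : LinearMap.BilinForm ℝ V)
    (J : V →ₗ[ℝ] V) (X Y Z W : V) : ℝ :=
  g (J X) Z * g (J Y) W - g (J Y) Z * g (J X) W + 2 * g (J X) Y * g (J Z) W

/-!
Write `aᵢ = g(Y, JᵢX)` and `A = Σ 3μᵢaᵢJᵢ`. Then `𝒥_X Y = μ₀(ε_X Y − g(X,Y)X) − AX` and, by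
skew-adjointness, `𝒥_Y X = μ₀(ε_Y X − g(X,Y)Y) + AY`, while the Clifford relations give
`A² = (Σ cᵢ(3μᵢaᵢ)²)·id`. If `𝒥_X Y = λY` with `D = μ₀ε_X − λ ≠ 0`, substituting `DY` into
`D·𝒥_Y X` and using `A²` shows that `𝒥_Y X` is a multiple of `X`. If `D = 0`, then
`AX = −μ₀g(X,Y)X`; applying `A` once more and pairing with `Y` yields
`Σ (3cᵢμᵢ + μ₀)μᵢaᵢ² = 0`, so the sign condition forces all `aᵢ = 0`; hence `A = 0`,
`μ₀g(X,Y) = 0` and `𝒥_Y X = μ₀ε_Y X`.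
-/

section Clifford

variable {ι A : Type*} [Fintype ι] [DecidableEq ι] [Ring A] [Algebra ℝ A]

theorem sum_smul_mul_self_of_anticomm {c : ι → ℝ} {e : ι → A}
    (he : ∀ i j, e i * e j + e j * e i = (if i = j then 2 * c i else 0 : ℝ) • (1 : A))
    (p : ι → ℝ) :
    (∑ i, p i • e i) * (∑ i, p i • e i) = (∑ i, c i * p i ^ 2) • (1 : A) := by
  have hexpand : (∑ i, p i • e i) * (∑ i, p i • e i) = ∑ i, ∑ j, (p i * p j) • (e i * e j) := by
    simp only [sum_mul_sum, smul_mul_smul_comm]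
  refine smul_right_injective A (two_ne_zero (α := ℝ)) ?_
  calc (2 : ℝ) • ((∑ i, p i • e i) * (∑ i, p i • e i))
      = ∑ i, ∑ j, (p i * p j) • (e i * e j + e j * e i) := by
        rw [two_smul, hexpand]
        nth_rewrite 2 [sum_comm]
        simp only [← sum_add_distrib, smul_add, mul_comm (p _) (p _)]
    _ = (2 : ℝ) • ((∑ i, c i * p i ^ 2) • (1 : A)) := by
        simp only [he, ite_smul, zero_smul, smul_ite, smul_zero, sum_ite_eq,
          mem_univ, if_true, sum_smul, smul_sum, smul_smul]
        exact sum_congr rfl fun i _ => by ring_nf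

end Clifford

theorem eq_zero_of_sum_mul_sq_eq_zero {ι : Type*} [Fintype ι] {w x : ι → ℝ}
    (hw : (∀ i, 0 < w i) ∨ (∀ i, w i < 0)) (h : ∑ i, w i * x i ^ 2 = 0) (i : ι) : x i = 0 := by
  have of_pos : ∀ w : ι → ℝ, (∀ i, 0 < w i) → ∑ i, w i * x i ^ 2 = 0 → x i = 0 := by
    intro w hw h
    have := (sum_eq_zero_iff_of_nonneg fun j _ => mul_nonneg (hw j).le (sq_nonneg (x j))).mp
      h i (mem_univ i)
    simpa [(hw i).ne'] using this
  rcases hw with hw | hw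
  · exact of_pos w hw h
  · exact of_pos (-w) (fun j => neg_pos.mpr (hw j)) (by simp [neg_mul, h])

section SquareOfEndomorphism

variable {K V : Type*} [Field K] [AddCommGroup V] [Module K V] {A : Module.End K V} {s : K}

theorem smul_add_apply_eq_of_mul_self (hA : A * A = s • 1) {D q : K} {X Y : V}
    (hY : D • Y = q • X + A X) (e : K) :
    D • (e • X - q • Y + A Y) = (D * e - q ^ 2 + s) • X := by
  have hAA : A (A X) = s • X := by
    simpa only [Module.End.mul_apply, LinearMap.smul_apply, Module.End.one_apply] using
      congrArg (· X) hA
  calc D • (e • X - q • Y + A Y) = (D * e) • X - q • (D • Y) + A (D • Y) := by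
        rw [map_smul, smul_add, smul_sub, smul_smul, smul_comm D q]
    _ = (D * e - q ^ 2 + s) • X := by
        rw [hY, map_add, map_smul, hAA]
        module

theorem eq_sq_of_mul_self_eq_smul_one (hA : A * A = s • 1) {q : K} {X : V} (hX : X ≠ 0)
    (h : q • X + A X = 0) : s = q ^ 2 := by
  have := smul_add_apply_eq_of_mul_self hA (D := 0) (q := q) (X := X) (Y := 0)
    (by rw [smul_zero, h]) 0
  rw [zero_smul, eq_comm, smul_eq_zero] at this
  linear_combination this.resolve_right hX

theorem hasEigenvector_of_smul_apply_eq_smul {f : Module.End K V} {D k : K} {x : V} (hD : D ≠ 0)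
    (hx : x ≠ 0) (h : D • f x = k • x) : f.HasEigenvector (D⁻¹ * k) x := by
  refine Module.End.hasEigenvector_iff.mpr ⟨Module.End.mem_eigenspace_iff.mpr ?_, hx⟩
  rw [← inv_smul_smul₀ hD (f x), h, smul_smul]

end SquareOfEndomorphism

section JacobiOperator

variable {V ι : Type*} [AddCommGroup V] [Module ℝ V] [Fintype ι] (g : LinearMap.BilinForm ℝ V)

theorem apply_self_eq_zero_of_skew (hsymm : ∀ x y, g x y = g y x) {J : Module.End ℝ V}
    (hskew : ∀ x y, g (J x) y = - g x (J y)) (x : V) : g (J x) x = 0 := by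
  linarith [hskew x x, hsymm x (J x)]

theorem apply_skew_swap (hsymm : ∀ x y, g x y = g y x) {J : Module.End ℝ V}
    (hskew : ∀ x y, g (J x) y = - g x (J y)) (x y : V) : g x (J y) = - g y (J x) := by
  rw [hsymm, hskew]

theorem jacobi_eq_of_semiClifford (hsymm : ∀ x y, g x y = g y x) (hnd : g.Nondegenerate)
    {μ₀ : ℝ} {μ : ι → ℝ} {J : ι → Module.End ℝ V}
    (hskew : ∀ i, ∀ x y : V, g (J i x) y = - g x (J i y))
    {R : V → V → V → V → ℝ}
    (hR : ∀ X Y Z W, R X Y Z W = μ₀ * R0 g X Y Z W + ∑ i, μ i * RJ g (J i) X Y Z W)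
    {Jac : V → V →ₗ[ℝ] V} (hJac : ∀ X Y Z, g (Jac X Y) Z = R Y X X Z) (P Q : V) :
    Jac P Q = (μ₀ * g P P) • Q - (μ₀ * g P Q) • P - (∑ i, (3 * μ i * g Q (J i P)) • J i) P := by
  refine sub_eq_zero.mp (hnd.1 _ fun Z => ?_)
  have hRJ : ∀ i, μ i * RJ g (J i) Q P P Z = -(3 * μ i * g Q (J i P) * g (J i P) Z) := fun i => by
    rw [RJ, apply_self_eq_zero_of_skew g hsymm (hskew i), hskew]
    ring
  simp only [map_sub, map_smul, LinearMap.sub_apply, LinearMap.smul_apply, LinearMap.sum_apply,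
    map_sum, hJac, hR, R0, hRJ, hsymm Q P, smul_eq_mul, sum_neg_distrib]
  ring

theorem pairing_apply_eq_zero_of_sign_condition [DecidableEq ι] (hsymm : ∀ x y, g x y = g y x)
    {μ₀ : ℝ} {μ c : ι → ℝ} {J : ι → Module.End ℝ V}
    (hhur : ∀ i j, J i * J j + J j * J i = (if i = j then 2 * c i else 0 : ℝ) • 1)
    (hsign : (∀ i, (3 * c i * μ i + μ₀) * μ i > 0) ∨ (∀ i, (3 * c i * μ i + μ₀) * μ i < 0))
    {X Y : V} (hX : X ≠ 0)
    (h : (μ₀ * g X Y) • X + (∑ i, (3 * μ i * g Y (J i X)) • J i) X = 0) (i : ι) :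
    g Y (J i X) = 0 := by
  have hsq := eq_sq_of_mul_self_eq_smul_one (sum_smul_mul_self_of_anticomm hhur _) hX h
  have hpair : μ₀ * g X Y * g X Y + ∑ i, 3 * μ i * g Y (J i X) * g Y (J i X) = 0 := by
    simpa only [map_add, map_smul, LinearMap.add_apply, LinearMap.smul_apply, LinearMap.sum_apply,
      map_sum, smul_eq_mul, hsymm (J _ X) Y, map_zero, LinearMap.zero_apply] using
      congrArg (g · Y) h
  refine eq_zero_of_sum_mul_sq_eq_zero (x := fun i => g Y (J i X)) hsign ?_ i
  have hsplit : ∑ i, (3 * c i * μ i + μ₀) * μ i * g Y (J i X) ^ 2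
      = (∑ i, c i * (3 * μ i * g Y (J i X)) ^ 2
        + μ₀ * ∑ i, 3 * μ i * g Y (J i X) * g Y (J i X)) / 3 := by
    rw [mul_sum, ← sum_add_distrib, sum_div]
    exact sum_congr rfl fun i _ => by ring
  rw [hsplit, hsq]
  linear_combination (μ₀ / 3) * hpair

end JacobiOperator

theorem semiClifford_totally_jacobiDual_general
    {V : Type*} [AddCommGroup V] [Module ℝ V]
    (g : LinearMap.BilinForm ℝ V) (hsymm : ∀ x y, g x y = g y x) (hnd : g.Nondegenerate)
    {m : ℕ} (μ₀ : ℝ) (μ c : Fin m → ℝ) (J : Fin m → V →ₗ[ℝ] V)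
    (hskew : ∀ i, ∀ x y : V, g (J i x) y = - g x (J i y))
    (hhur : ∀ i j, J i ∘ₗ J j + J j ∘ₗ J i
      = ((if i = j then 2 * c i else 0 : ℝ) • LinearMap.id : V →ₗ[ℝ] V))
    (R : V → V → V → V → ℝ)
    (hR : ∀ X Y Z W, R X Y Z W = μ₀ * R0 g X Y Z W + ∑ i, μ i * RJ g (J i) X Y Z W)
    (Jac : V → V →ₗ[ℝ] V)
    (hJac : ∀ X Y Z, g (Jac X Y) Z = R Y X X Z)
    (hsign : (∀ i, (3 * c i * μ i + μ₀) * μ i > 0) ∨ (∀ i, (3 * c i * μ i + μ₀) * μ i < 0)) :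
    ∀ X Y : V, X ≠ 0 →
      (∃ lam : ℝ, Module.End.HasEigenvector (Jac X) lam Y) →
      ∃ lam : ℝ, Module.End.HasEigenvector (Jac Y) lam X := by
  rintro X Y hX ⟨lam, hev⟩
  set A : Module.End ℝ V := ∑ i, (3 * μ i * g Y (J i X)) • J i
  have hJYX : Jac Y X = (μ₀ * g Y Y) • X - (μ₀ * g X Y) • Y + A Y := by
    rw [jacobi_eq_of_semiClifford g hsymm hnd hskew hR hJac Y X, hsymm Y X]
    simp only [apply_skew_swap g hsymm (hskew _) X, mul_neg, neg_smul, sum_neg_distrib,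
      LinearMap.neg_apply, sub_neg_eq_add, A]
  have hEig : (μ₀ * g X X - lam) • Y = (μ₀ * g X Y) • X + A X := by
    rw [sub_smul, ← Module.End.mem_eigenspace_iff.mp hev.1,
      jacobi_eq_of_semiClifford g hsymm hnd hskew hR hJac X Y]
    abel
  by_cases hD : μ₀ * g X X - lam = 0
  · have ha := pairing_apply_eq_zero_of_sign_condition g hsymm hhur hsign hX
      (by rw [← hEig, hD, zero_smul])
    have hA : A = 0 := sum_eq_zero fun i _ => by rw [ha i, mul_zero, zero_smul]
    have hq : μ₀ * g X Y = 0 := by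
      rw [hD, zero_smul, hA, LinearMap.zero_apply, add_zero, eq_comm, smul_eq_zero] at hEig
      exact hEig.resolve_right hX
    refine ⟨μ₀ * g Y Y, Module.End.hasEigenvector_iff.mpr ⟨?_, hX⟩⟩
    rw [Module.End.mem_eigenspace_iff, hJYX, hq, hA]
    simp
  · have hsmul := smul_add_apply_eq_of_mul_self (sum_smul_mul_self_of_anticomm hhur _) hEig
      (μ₀ * g Y Y)
    rw [← hJYX] at hsmul
    exact ⟨_, hasEigenvector_of_smul_apply_eq_smul hD hX hsmul⟩

/-- Theorem 7 of the paper: a semi-Clifford algebraic curvature tensor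
(`cᵢ ∈ {−1,1}`, `μᵢ ≠ 0`) such that `(3cᵢμᵢ+μ₀)μᵢ > 0` for all `i`, or
`(3cᵢμᵢ+μ₀)μᵢ < 0` for all `i`, is totally Jacobi-dual. -/
theorem semiClifford_totally_jacobiDual
    {V : Type*} [AddCommGroup V] [Module ℝ V] [FiniteDimensional ℝ V]
    (g : LinearMap.BilinForm ℝ V) (hsymm : ∀ x y, g x y = g y x) (hnd : g.Nondegenerate)
    {m : ℕ} (μ₀ : ℝ) (μ c : Fin m → ℝ) (J : Fin m → V →ₗ[ℝ] V)
    (hskew : ∀ i, ∀ x y : V, g (J i x) y = - g x (J i y))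
    (hhur : ∀ i j, J i ∘ₗ J j + J j ∘ₗ J i
      = ((if i = j then 2 * c i else 0 : ℝ) • LinearMap.id : V →ₗ[ℝ] V))
    (R : V → V → V → V → ℝ)
    (hR : ∀ X Y Z W, R X Y Z W = μ₀ * R0 g X Y Z W + ∑ i, μ i * RJ g (J i) X Y Z W)
    (Jac : V → V →ₗ[ℝ] V)
    (hJac : ∀ X Y Z, g (Jac X Y) Z = R Y X X Z)
    (hc : ∀ i, c i = -1 ∨ c i = 1) (hμ : ∀ i, μ i ≠ 0)
    (hsign : (∀ i, (3 * c i * μ i + μ₀) * μ i > 0) ∨ (∀ i, (3 * c i * μ i + μ₀) * μ i < 0)) :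
    ∀ X Y : V, X ≠ 0 →
      (∃ lam : ℝ, Module.End.HasEigenvector (Jac X) lam Y) →
      ∃ lam : ℝ, Module.End.HasEigenvector (Jac Y) lam X :=
  semiClifford_totally_jacobiDual_general g hsymm hnd μ₀ μ c J hskew hhur R hR Jac hJac hsign
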